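/- Under the ADMM setting (see context), assuming a saddle point of 𝓛 exists, both constraint violations of the iterates converge to zero: ‖Wᵏ X − Zᵏ‖_F → 0 and ‖W̃ᵏ − Wᵏ‖_F → 0 as k → ∞. -/

import Mathlib

open Matrix BigOperators Finset Filter

/-- Squared Frobenius norm. -/
noncomputable def frobSq {m n : ℕ} (A : Matrix (Fin m) (Fin n) ℝ) : ℝ :=
  ∑ i, ∑ j, (A i j) ^ 2

/-- Frobenius norm. -/
noncomputable def frob {m n : ℕ} (A : Matrix (Fin m) (Fin n) ℝ) : ℝ :=
  Real.sqrt (frobSq A)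

/-- Entrywise ℓ₁ norm. -/
noncomputable def l1 {m n : ℕ} (A : Matrix (Fin m) (Fin n) ℝ) : ℝ :=
  ∑ i, ∑ j, |A i j|

/-- ℓ_{2,1} norm: sum of Euclidean norms of the rows. -/
noncomputable def l21 {m n : ℕ} (A : Matrix (Fin m) (Fin n) ℝ) : ℝ :=
  ∑ i, Real.sqrt (∑ j, (A i j) ^ 2)

/-- Nuclear norm: sum of singular values (square roots of eigenvalues of AᵀA). -/
noncomputable def nuclearNorm {m n : ℕ} (A : Matrix (Fin m) (Fin n) ℝ) : ℝ :=
  ∑ i, Real.sqrt ((show (Aᵀ * A).IsHermitian by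
    simpa using Matrix.isHermitian_conjTranspose_mul_self A).eigenvalues i)

/-- Matrix inner product ⟨P,Q⟩ = tr(PᵀQ). -/
noncomputable def minner {m n : ℕ} (A B : Matrix (Fin m) (Fin n) ℝ) : ℝ :=
  ∑ i, ∑ j, A i j * B i j

/-- ℓ_{2,0}: number of nonzero rows. -/
noncomputable def l20 {m n : ℕ} (A : Matrix (Fin m) (Fin n) ℝ) : ℕ :=
  {i | A i ≠ 0}.ncard
/-- The augmented Lagrangian 𝓛 of the split ALFS problem. -/
noncomputable def AL {d n : ℕ} (X : Matrix (Fin d) (Fin n) ℝ)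
    (T : Matrix (Fin n) (Fin n) ℝ) (α β γ η ρ₁ ρ₂ : ℝ)
    (W : Matrix (Fin n) (Fin d) ℝ) (Z : Matrix (Fin n) (Fin n) ℝ)
    (Wt : Matrix (Fin n) (Fin d) ℝ) (Λ₁ : Matrix (Fin n) (Fin n) ℝ)
    (Λ₂ : Matrix (Fin n) (Fin d) ℝ) : ℝ :=
  frobSq (X - X * W * X) + α * l21 W + β * l21 Wᵀ + γ * nuclearNorm Wt
    + η * l1 (Matrix.hadamard T Z) + minner Λ₁ (W * X - Z) + minner Λ₂ (W - Wt)
    + (ρ₁ / 2) * frobSq (W * X - Z) + (ρ₂ / 2) * frobSq (W - Wt)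

/-- (W*, Z*, W̃*, Λ₁*, Λ₂*) is a saddle point of the augmented Lagrangian 𝓛. -/
def IsSaddle {d n : ℕ} (X : Matrix (Fin d) (Fin n) ℝ)
    (T : Matrix (Fin n) (Fin n) ℝ) (α β γ η ρ₁ ρ₂ : ℝ)
    (Ws : Matrix (Fin n) (Fin d) ℝ) (Zs : Matrix (Fin n) (Fin n) ℝ)
    (Wts : Matrix (Fin n) (Fin d) ℝ) (Λ₁s : Matrix (Fin n) (Fin n) ℝ)
    (Λ₂s : Matrix (Fin n) (Fin d) ℝ) : Prop :=
  ∀ (W : Matrix (Fin n) (Fin d) ℝ) (Z : Matrix (Fin n) (Fin n) ℝ)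
    (Wt : Matrix (Fin n) (Fin d) ℝ) (Λ₁ : Matrix (Fin n) (Fin n) ℝ)
    (Λ₂ : Matrix (Fin n) (Fin d) ℝ),
    AL X T α β γ η ρ₁ ρ₂ Ws Zs Wts Λ₁ Λ₂ ≤ AL X T α β γ η ρ₁ ρ₂ Ws Zs Wts Λ₁s Λ₂s
    ∧ AL X T α β γ η ρ₁ ρ₂ Ws Zs Wts Λ₁s Λ₂s ≤ AL X T α β γ η ρ₁ ρ₂ W Z Wt Λ₁s Λ₂s

/-- The ADMM iterates for the split ALFS problem: `W (k+1)` is a minimizer of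
`W ↦ 𝓛(W, Z k, W̃ k, Λ₁ k, Λ₂ k)`, then `Z`, then `W̃` are updated as (the) minimizers of
their respective subproblems, and the multipliers are updated by gradient ascent steps. -/
def IsADMMSequence {d n : ℕ} (X : Matrix (Fin d) (Fin n) ℝ)
    (T : Matrix (Fin n) (Fin n) ℝ) (α β γ η ρ₁ ρ₂ : ℝ)
    (W : ℕ → Matrix (Fin n) (Fin d) ℝ) (Z : ℕ → Matrix (Fin n) (Fin n) ℝ)
    (Wt : ℕ → Matrix (Fin n) (Fin d) ℝ) (Λ₁ : ℕ → Matrix (Fin n) (Fin n) ℝ)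
    (Λ₂ : ℕ → Matrix (Fin n) (Fin d) ℝ) : Prop :=
  (∀ k, ∀ W', AL X T α β γ η ρ₁ ρ₂ (W (k+1)) (Z k) (Wt k) (Λ₁ k) (Λ₂ k)
      ≤ AL X T α β γ η ρ₁ ρ₂ W' (Z k) (Wt k) (Λ₁ k) (Λ₂ k))
  ∧ (∀ k, ∀ Z', AL X T α β γ η ρ₁ ρ₂ (W (k+1)) (Z (k+1)) (Wt k) (Λ₁ k) (Λ₂ k)
      ≤ AL X T α β γ η ρ₁ ρ₂ (W (k+1)) Z' (Wt k) (Λ₁ k) (Λ₂ k))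
  ∧ (∀ k, ∀ Wt', AL X T α β γ η ρ₁ ρ₂ (W (k+1)) (Z (k+1)) (Wt (k+1)) (Λ₁ k) (Λ₂ k)
      ≤ AL X T α β γ η ρ₁ ρ₂ (W (k+1)) (Z (k+1)) Wt' (Λ₁ k) (Λ₂ k))
  ∧ (∀ k, Λ₁ (k+1) = Λ₁ k + ρ₁ • (W (k+1) * X - Z (k+1)))
  ∧ (∀ k, Λ₂ (k+1) = Λ₂ k + ρ₂ • (W (k+1) - Wt (k+1)))


/-!
Every subproblem of the ADMM iteration minimizes a convex function plus a quadratic, so its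
first-order condition is a subgradient inequality: the Z- and W̃-steps make Λ₁ᵏ⁺¹ and Λ₂ᵏ⁺¹
subgradients of η‖T ⊙ ·‖₁ at Zᵏ⁺¹ and of γ‖·‖_* at W̃ᵏ⁺¹. Convexity of the nuclear norm
comes from ‖A‖_* = max {⟨Q, A⟩ : QᵀQ ≤ 1}. Adding these inequalities to the one given by the
saddle point shows, as in the classical two-block ADMM analysis, that the Lyapunov function
  Vᵏ = Σᵢ (‖Λᵢᵏ − Λᵢ*‖² / (2ρᵢ) + ρᵢ ‖zᵢᵏ − zᵢ*‖² / 2),   z₁ = Z, z₂ = W̃,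
decreases from the first step on by at least Σᵢ ρᵢ ‖rᵢᵏ⁺¹‖² / 2, where r₁ = WX − Z and
r₂ = W − W̃; the cross term ⟨rᵢᵏ⁺¹, zᵢᵏ⁺¹ − zᵢᵏ⟩ is nonnegative by monotonicity of the
subdifferential. Hence the squared residuals are summable and tend to zero.
-/

open Topology

section Frobenius
variable {m n : ℕ}

lemma minner_comm (A B : Matrix (Fin m) (Fin n) ℝ) : minner A B = minner B A := by
  simp [minner, mul_comm]

lemma minner_add_left (A B C : Matrix (Fin m) (Fin n) ℝ) :
    minner (A + B) C = minner A C + minner B C := by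
  simp [minner, add_mul, Finset.sum_add_distrib]

lemma minner_add_right (A B C : Matrix (Fin m) (Fin n) ℝ) :
    minner A (B + C) = minner A B + minner A C := by
  simp [minner, mul_add, Finset.sum_add_distrib]

lemma minner_sub_left (A B C : Matrix (Fin m) (Fin n) ℝ) :
    minner (A - B) C = minner A C - minner B C := by
  simp [minner, sub_mul, Finset.sum_sub_distrib]

lemma minner_sub_right (A B C : Matrix (Fin m) (Fin n) ℝ) :
    minner A (B - C) = minner A B - minner A C := by
  simp [minner, mul_sub, Finset.sum_sub_distrib]

lemma minner_smul_left (A B : Matrix (Fin m) (Fin n) ℝ) (t : ℝ) :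
    minner (t • A) B = t * minner A B := by
  simp [minner, Finset.mul_sum, mul_assoc]

lemma minner_smul_right (A B : Matrix (Fin m) (Fin n) ℝ) (t : ℝ) :
    minner A (t • B) = t * minner A B := by
  simp [minner, Finset.mul_sum, mul_left_comm]

lemma minner_eq_trace (A B : Matrix (Fin m) (Fin n) ℝ) : minner A B = trace (Aᵀ * B) := by
  simp only [minner, trace, Matrix.diag, mul_apply, transpose_apply]
  exact Finset.sum_comm

lemma minner_mul_right_of_mul_transpose_eq_one (A B : Matrix (Fin m) (Fin n) ℝ)
    {U : Matrix (Fin n) (Fin n) ℝ} (hU : U * Uᵀ = 1) : minner (A * U) (B * U) = minner A B := by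
  rw [minner_eq_trace, minner_eq_trace, transpose_mul, Matrix.mul_assoc, trace_mul_comm,
    Matrix.mul_assoc, Matrix.mul_assoc, hU, Matrix.mul_one]

lemma minner_le_sum_sqrt_mul_sqrt_diag (A B : Matrix (Fin m) (Fin n) ℝ) :
    minner A B ≤ ∑ j, √((Aᵀ * A) j j) * √((Bᵀ * B) j j) := by
  rw [minner, Finset.sum_comm]
  refine Finset.sum_le_sum fun j _ => ?_
  simpa [mul_apply, sq] using Real.sum_mul_le_sqrt_mul_sqrt univ (A · j) (B · j)

lemma frobSq_eq_minner (A : Matrix (Fin m) (Fin n) ℝ) : frobSq A = minner A A := by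
  simp [frobSq, minner, sq]

lemma frobSq_nonneg (A : Matrix (Fin m) (Fin n) ℝ) : 0 ≤ frobSq A := by
  unfold frobSq
  positivity

lemma frobSq_eq_zero_iff {A : Matrix (Fin m) (Fin n) ℝ} : frobSq A = 0 ↔ A = 0 := by
  simp [frobSq, Finset.sum_eq_zero_iff_of_nonneg, Finset.sum_nonneg, sq_nonneg, ← Matrix.ext_iff]

lemma frobSq_sub_comm (A B : Matrix (Fin m) (Fin n) ℝ) : frobSq (A - B) = frobSq (B - A) := by
  simp only [frobSq, Matrix.sub_apply]
  exact Finset.sum_congr rfl fun i _ => Finset.sum_congr rfl fun j _ => by ring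

lemma frobSq_le_frobSq_add {A B : Matrix (Fin m) (Fin n) ℝ} (h : 0 ≤ minner A B) :
    frobSq A ≤ frobSq (A + B) := by
  simp only [frobSq_eq_minner, minner_add_left, minner_add_right, minner_comm B A]
  linarith [frobSq_eq_minner B ▸ frobSq_nonneg B]

end Frobenius

theorem ConvexOn.sum {𝕜 E β ι : Type*} [Semiring 𝕜] [PartialOrder 𝕜] [AddCommMonoid E]
    [AddCommMonoid β] [PartialOrder β] [IsOrderedAddMonoid β] [SMul 𝕜 E] [Module 𝕜 β]
    {t : Set E} (ht : Convex 𝕜 t) {s : Finset ι} {f : ι → E → β}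
    (hf : ∀ i ∈ s, ConvexOn 𝕜 t (f i)) : ConvexOn 𝕜 t fun x => ∑ i ∈ s, f i x := by
  simpa only [← Finset.sum_apply] using
    Finset.sum_induction f (ConvexOn 𝕜 t) (fun _ _ => ConvexOn.add)
      (show ConvexOn 𝕜 t 0 from convexOn_const (0 : β) ht) hf

section Convexity
variable {m n : ℕ}

lemma convexOn_frobSq : ConvexOn ℝ Set.univ (frobSq : Matrix (Fin m) (Fin n) ℝ → ℝ) :=
  ConvexOn.sum convex_univ fun i _ => ConvexOn.sum convex_univ fun j _ =>
    (even_two.convexOn_pow (𝕜 := ℝ)).comp_linearMap (entryLinearMap ℝ ℝ i j)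

lemma convexOn_l1 : ConvexOn ℝ Set.univ (l1 : Matrix (Fin m) (Fin n) ℝ → ℝ) :=
  ConvexOn.sum convex_univ fun i _ => ConvexOn.sum convex_univ fun j _ =>
    (convexOn_norm (E := ℝ) convex_univ).comp_linearMap (entryLinearMap ℝ ℝ i j)

lemma convexOn_l21 : ConvexOn ℝ Set.univ (l21 : Matrix (Fin m) (Fin n) ℝ → ℝ) := by
  refine ConvexOn.sum convex_univ fun i _ => ?_
  have := (convexOn_norm (E := EuclideanSpace ℝ (Fin n)) convex_univ).comp_linearMap
    ((EuclideanSpace.equiv (Fin n) ℝ).symm.toLinearMap ∘ₗ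
      LinearMap.proj (R := ℝ) (φ := fun _ : Fin m => Fin n → ℝ) i)
  simp only [Function.comp_def, EuclideanSpace.norm_eq, Real.norm_eq_abs, sq_abs] at this
  exact this

end Convexity

lemma inv_sqrt_mul_self_mul_inv_sqrt_le_one {x : ℝ} (hx : 0 ≤ x) :
    (√x)⁻¹ * x * (√x)⁻¹ ≤ 1 := by
  rcases hx.eq_or_lt with rfl | hx
  · simp
  · rw [mul_inv_le_iff₀ (by positivity), inv_mul_le_iff₀ (by positivity), one_mul,
      Real.mul_self_sqrt hx.le]

section SingularValues
variable {m n : ℕ}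

lemma Matrix.isHermitian_transpose_mul_self (A : Matrix (Fin m) (Fin n) ℝ) :
    (Aᵀ * A).IsHermitian := by
  simpa using isHermitian_conjTranspose_mul_self A

variable (A : Matrix (Fin m) (Fin n) ℝ)

noncomputable def rightSingularMatrix : Matrix (Fin n) (Fin n) ℝ :=
  (isHermitian_transpose_mul_self A).eigenvectorUnitary

noncomputable def sqSingularValues : Fin n → ℝ :=
  (isHermitian_transpose_mul_self A).eigenvalues

lemma nuclearNorm_eq_sum_sqrt_sqSingularValues :
    nuclearNorm A = ∑ j, √(sqSingularValues A j) :=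
  rfl

lemma sqSingularValues_nonneg (j : Fin n) : 0 ≤ sqSingularValues A j :=
  eigenvalues_conjTranspose_mul_self_nonneg A j

lemma rightSingularMatrix_transpose_mul_self :
    (rightSingularMatrix A)ᵀ * rightSingularMatrix A = 1 := by
  simpa [rightSingularMatrix, star_eq_conjTranspose] using
    Unitary.coe_star_mul_self (isHermitian_transpose_mul_self A).eigenvectorUnitary

lemma rightSingularMatrix_mul_transpose_self :
    rightSingularMatrix A * (rightSingularMatrix A)ᵀ = 1 := by
  simpa [rightSingularMatrix, star_eq_conjTranspose] using
    Unitary.coe_mul_star_self (isHermitian_transpose_mul_self A).eigenvectorUnitary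

lemma transpose_mul_self_mul_rightSingularMatrix :
    (A * rightSingularMatrix A)ᵀ * (A * rightSingularMatrix A) = diagonal (sqSingularValues A) := by
  have := (isHermitian_transpose_mul_self A).conjStarAlgAut_star_eigenvectorUnitary
  simp only [Unitary.conjStarAlgAut_star_apply, star_eq_conjTranspose,
    conjTranspose_eq_transpose_of_trivial, RCLike.ofReal_real_eq_id, Function.id_comp] at this
  rw [sqSingularValues, ← this, rightSingularMatrix, transpose_mul]
  simp [Matrix.mul_assoc]

lemma minner_le_nuclearNorm {Q : Matrix (Fin m) (Fin n) ℝ} (hQ : (1 - Qᵀ * Q).PosSemidef) :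
    minner Q A ≤ nuclearNorm A := by
  set V := rightSingularMatrix A
  rw [← minner_mul_right_of_mul_transpose_eq_one Q A (rightSingularMatrix_mul_transpose_self A)]
  refine (minner_le_sum_sqrt_mul_sqrt_diag _ _).trans (Finset.sum_le_sum fun j _ => ?_)
  have hdiag : 0 ≤ (1 - (Q * V)ᵀ * (Q * V) : Matrix (Fin n) (Fin n) ℝ) j j := by
    simpa [conjTranspose_eq_transpose_of_trivial, Matrix.mul_sub, Matrix.sub_mul, V,
      rightSingularMatrix_transpose_mul_self, Matrix.mul_assoc] using
      (hQ.conjTranspose_mul_mul_same V).diag_nonneg (i := j)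
  rw [transpose_mul_self_mul_rightSingularMatrix, diagonal_apply_eq]
  refine mul_le_of_le_one_left (Real.sqrt_nonneg _) (Real.sqrt_le_one.mpr ?_)
  simpa [Matrix.sub_apply] using hdiag

/-- The witness is the orthogonal polar factor `A V Σ⁻¹ Vᵀ` of `A`; zero singular values are
harmless because `(√0)⁻¹ = 0`. -/
lemma exists_minner_eq_nuclearNorm :
    ∃ Q : Matrix (Fin m) (Fin n) ℝ, (1 - Qᵀ * Q).PosSemidef ∧ minner Q A = nuclearNorm A := by
  set V := rightSingularMatrix A
  set S : Matrix (Fin n) (Fin n) ℝ := diagonal fun j => (√(sqSingularValues A j))⁻¹ with hS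
  have hD : (A * V)ᵀ * (A * V) = diagonal (sqSingularValues A) :=
    transpose_mul_self_mul_rightSingularMatrix A
  have hV : Vᵀ * V = 1 := rightSingularMatrix_transpose_mul_self A
  have hV' : V * Vᵀ = 1 := rightSingularMatrix_mul_transpose_self A
  refine ⟨A * V * S * Vᵀ, ?_, ?_⟩
  · have hQ : (A * V * S * Vᵀ)ᵀ * (A * V * S * Vᵀ)
        = V * (S * diagonal (sqSingularValues A) * S) * Vᵀ := by
      rw [← hD]
      simp [hS, Matrix.mul_assoc]
    have hdiag :
        (1 - S * diagonal (sqSingularValues A) * S : Matrix (Fin n) (Fin n) ℝ).PosSemidef := by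
      rw [hS, diagonal_mul_diagonal, diagonal_mul_diagonal, ← diagonal_one, diagonal_sub]
      exact posSemidef_diagonal_iff.mpr fun j =>
        sub_nonneg.mpr (inv_sqrt_mul_self_mul_inv_sqrt_le_one (sqSingularValues_nonneg A j))
    have := hdiag.mul_mul_conjTranspose_same V
    rwa [conjTranspose_eq_transpose_of_trivial, Matrix.mul_sub, Matrix.sub_mul, Matrix.mul_one,
      hV', ← hQ] at this
  · rw [← minner_mul_right_of_mul_transpose_eq_one _ A hV', minner_eq_trace,
      Matrix.mul_assoc _ Vᵀ, hV, Matrix.mul_one, transpose_mul, Matrix.mul_assoc, hD, hS,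
      diagonal_transpose, diagonal_mul_diagonal, trace_diagonal,
      nuclearNorm_eq_sum_sqrt_sqSingularValues]
    exact Finset.sum_congr rfl fun j _ => by rw [← div_eq_inv_mul, Real.div_sqrt]

end SingularValues

lemma convexOn_nuclearNorm {m n : ℕ} :
    ConvexOn ℝ Set.univ (nuclearNorm : Matrix (Fin m) (Fin n) ℝ → ℝ) := by
  refine ⟨convex_univ, fun A _ B _ a b ha hb _ => ?_⟩
  obtain ⟨Q, hQ, hQA⟩ := exists_minner_eq_nuclearNorm (a • A + b • B)
  rw [← hQA, minner_add_right, minner_smul_right, minner_smul_right, smul_eq_mul, smul_eq_mul]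
  gcongr <;> exact minner_le_nuclearNorm _ hQ

lemma nonneg_of_forall_mul_add_sq_mul_nonneg {b c : ℝ}
    (h : ∀ t : ℝ, 0 < t → t ≤ 1 → 0 ≤ t * b + t ^ 2 * c) : 0 ≤ b := by
  have hlim : Tendsto (fun t => b + t * c) (𝓝[>] 0) (𝓝 b) := by
    have : Continuous fun t : ℝ => b + t * c := by fun_prop
    simpa using (this.tendsto 0).mono_left nhdsWithin_le_nhds
  refine ge_of_tendsto hlim ?_
  filter_upwards [Ioc_mem_nhdsGT zero_lt_one] with t ⟨ht0, ht1⟩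
  refine nonneg_of_mul_nonneg_right ?_ ht0
  linarith [h t ht0 ht1]

theorem ConvexOn.le_add_of_forall_le_segment {E : Type*} [AddCommGroup E] [Module ℝ E]
    {φ : E → ℝ} (hφ : ConvexOn ℝ Set.univ φ) {x y : E} {a c : ℝ}
    (h : ∀ t : ℝ, 0 < t → t ≤ 1 → φ x ≤ φ (x + t • (y - x)) + t * a + t ^ 2 * c) :
    φ x ≤ φ y + a := by
  suffices 0 ≤ φ y - φ x + a by linarith
  refine nonneg_of_forall_mul_add_sq_mul_nonneg (c := c) fun t ht0 ht1 => ?_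
  have hseg : φ (x + t • (y - x)) ≤ (1 - t) * φ x + t * φ y := by
    have := hφ.2 (Set.mem_univ x) (Set.mem_univ y) (sub_nonneg.mpr ht1) ht0.le (by ring)
    rwa [smul_eq_mul, smul_eq_mul, show (1 - t) • x + t • y = x + t • (y - x) by module] at this
  nlinarith [h t ht0 ht1]

def IsSubgradient {p q : ℕ} (g : Matrix (Fin p) (Fin q) ℝ → ℝ) (Λ z₀ : Matrix (Fin p) (Fin q) ℝ) :
    Prop :=
  ∀ z, g z₀ + minner Λ (z - z₀) ≤ g z

noncomputable def augPenalty {p q : ℕ} (Λ : Matrix (Fin p) (Fin q) ℝ) (ρ : ℝ)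
    (r : Matrix (Fin p) (Fin q) ℝ) : ℝ :=
  minner Λ r + ρ / 2 * frobSq r

section Optimality
variable {p q : ℕ} {g : Matrix (Fin p) (Fin q) ℝ → ℝ}

lemma IsSubgradient.minner_sub_nonneg {Λ Λ' z z' : Matrix (Fin p) (Fin q) ℝ}
    (h : IsSubgradient g Λ z) (h' : IsSubgradient g Λ' z') : 0 ≤ minner (Λ' - Λ) (z' - z) := by
  have h₁ := h z'
  have h₂ := h' z
  rw [← neg_sub z' z, ← neg_one_smul ℝ (z' - z), minner_smul_right] at h₂
  rw [minner_sub_left]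
  linarith

lemma augPenalty_zero (Λ : Matrix (Fin p) (Fin q) ℝ) (ρ : ℝ) : augPenalty Λ ρ 0 = 0 := by
  simp [augPenalty, minner, frobSq]

lemma augPenalty_add_smul (Λ r s : Matrix (Fin p) (Fin q) ℝ) (ρ t : ℝ) :
    augPenalty Λ ρ (r + t • s)
      = augPenalty Λ ρ r + t * minner (Λ + ρ • r) s + t ^ 2 * (ρ / 2 * frobSq s) := by
  simp only [augPenalty, frobSq_eq_minner, minner_add_left, minner_add_right, minner_smul_left,
    minner_smul_right, minner_comm s r]
  ring

lemma ConvexOn.isSubgradient_of_isMin_add_augPenalty (hg : ConvexOn ℝ Set.univ g)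
    {Λ c z₀ : Matrix (Fin p) (Fin q) ℝ} {ρ : ℝ}
    (hmin : ∀ z, g z₀ + augPenalty Λ ρ (c - z₀) ≤ g z + augPenalty Λ ρ (c - z)) :
    IsSubgradient g (Λ + ρ • (c - z₀)) z₀ := by
  intro z
  suffices g z₀ ≤ g z + -minner (Λ + ρ • (c - z₀)) (z - z₀) by linarith
  refine hg.le_add_of_forall_le_segment (c := ρ / 2 * frobSq (z - z₀)) fun t _ _ => ?_
  have h := hmin (z₀ + t • (z - z₀))
  rw [show c - (z₀ + t • (z - z₀)) = (c - z₀) + (-t) • (z - z₀) by module,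
    augPenalty_add_smul, neg_sq] at h
  linarith

end Optimality

section Objective
variable {d n : ℕ}

noncomputable def objW (X : Matrix (Fin d) (Fin n) ℝ) (α β : ℝ) (W : Matrix (Fin n) (Fin d) ℝ) :
    ℝ :=
  frobSq (X - X * W * X) + α * l21 W + β * l21 Wᵀ

noncomputable def objZ (T : Matrix (Fin n) (Fin n) ℝ) (η : ℝ) (Z : Matrix (Fin n) (Fin n) ℝ) : ℝ :=
  η * l1 (T ⊙ Z)

noncomputable def objWt (γ : ℝ) (Wt : Matrix (Fin n) (Fin d) ℝ) : ℝ :=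
  γ * nuclearNorm Wt

lemma AL_eq (X : Matrix (Fin d) (Fin n) ℝ) (T : Matrix (Fin n) (Fin n) ℝ) (α β γ η ρ₁ ρ₂ : ℝ)
    (W : Matrix (Fin n) (Fin d) ℝ) (Z : Matrix (Fin n) (Fin n) ℝ) (Wt : Matrix (Fin n) (Fin d) ℝ)
    (Λ₁ : Matrix (Fin n) (Fin n) ℝ) (Λ₂ : Matrix (Fin n) (Fin d) ℝ) :
    AL X T α β γ η ρ₁ ρ₂ W Z Wt Λ₁ Λ₂ = objW X α β W + objZ T η Z + objWt γ Wt
      + augPenalty Λ₁ ρ₁ (W * X - Z) + augPenalty Λ₂ ρ₂ (W - Wt) := by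
  rw [AL, objW, objZ, objWt, augPenalty, augPenalty]
  ring

lemma convexOn_objW (X : Matrix (Fin d) (Fin n) ℝ) {α β : ℝ} (hα : 0 ≤ α) (hβ : 0 ≤ β) :
    ConvexOn ℝ Set.univ (objW X α β) := by
  have hfit := convexOn_frobSq.comp_affineMap (AffineMap.const ℝ _ X -
    ((mulRightLinearMap (Fin d) ℝ X) ∘ₗ (mulLeftLinearMap (Fin d) ℝ X)).toAffineMap)
  have hcols := convexOn_l21.comp_linearMap
    (transposeLinearEquiv (Fin n) (Fin d) ℝ ℝ).toLinearMap
  exact (hfit.add (convexOn_l21.smul hα)).add (hcols.smul hβ)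

lemma convexOn_objZ (T : Matrix (Fin n) (Fin n) ℝ) {η : ℝ} (hη : 0 ≤ η) :
    ConvexOn ℝ Set.univ (objZ T η) := by
  have := convexOn_l1.comp_linearMap
    { toFun := (T ⊙ ·), map_add' := fun B C => hadamard_add T B C
      map_smul' := fun c B => hadamard_smul T B c }
  exact this.smul hη

lemma convexOn_objWt {γ : ℝ} (hγ : 0 ≤ γ) : ConvexOn ℝ Set.univ (objWt (d := d) (n := n) γ) :=
  convexOn_nuclearNorm.smul hγ

end Objective

namespace IsSaddle
variable {d n : ℕ} {X : Matrix (Fin d) (Fin n) ℝ} {T : Matrix (Fin n) (Fin n) ℝ}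
  {α β γ η ρ₁ ρ₂ : ℝ} {Ws : Matrix (Fin n) (Fin d) ℝ} {Zs : Matrix (Fin n) (Fin n) ℝ}
  {Wts : Matrix (Fin n) (Fin d) ℝ} {Λ₁s : Matrix (Fin n) (Fin n) ℝ} {Λ₂s : Matrix (Fin n) (Fin d) ℝ}

lemma feasible₁ (h : IsSaddle X T α β γ η ρ₁ ρ₂ Ws Zs Wts Λ₁s Λ₂s) : Ws * X = Zs := by
  have h₁ := (h Ws Zs Wts (Λ₁s + (Ws * X - Zs)) Λ₂s).1
  simp only [AL_eq, augPenalty, minner_add_left] at h₁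
  rw [← sub_eq_zero, ← frobSq_eq_zero_iff]
  linarith [frobSq_nonneg (Ws * X - Zs), frobSq_eq_minner (Ws * X - Zs)]

lemma feasible₂ (h : IsSaddle X T α β γ η ρ₁ ρ₂ Ws Zs Wts Λ₁s Λ₂s) : Ws = Wts := by
  have h₁ := (h Ws Zs Wts Λ₁s (Λ₂s + (Ws - Wts))).1
  simp only [AL_eq, augPenalty, minner_add_left] at h₁
  rw [← sub_eq_zero, ← frobSq_eq_zero_iff]
  linarith [frobSq_nonneg (Ws - Wts), frobSq_eq_minner (Ws - Wts)]

lemma obj_le (hα : 0 ≤ α) (hβ : 0 ≤ β) (hγ : 0 ≤ γ) (hη : 0 ≤ η)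
    (h : IsSaddle X T α β γ η ρ₁ ρ₂ Ws Zs Wts Λ₁s Λ₂s) (W : Matrix (Fin n) (Fin d) ℝ)
    (Z : Matrix (Fin n) (Fin n) ℝ) (Wt : Matrix (Fin n) (Fin d) ℝ) :
    objW X α β Ws + objZ T η Zs + objWt γ Wts
      ≤ objW X α β W + objZ T η Z + objWt γ Wt
        + (minner Λ₁s (W * X - Z) + minner Λ₂s (W - Wt)) := by
  let φ : Matrix (Fin n) (Fin d) ℝ × Matrix (Fin n) (Fin n) ℝ × Matrix (Fin n) (Fin d) ℝ → ℝ :=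
    fun p => objW X α β p.1 + objZ T η p.2.1 + objWt γ p.2.2
  have hφ : ConvexOn ℝ Set.univ φ :=
    (((convexOn_objW X hα hβ).comp_linearMap (LinearMap.fst ℝ _ _)).add
      ((convexOn_objZ T hη).comp_linearMap (LinearMap.fst ℝ _ _ ∘ₗ LinearMap.snd ℝ _ _))).add
      ((convexOn_objWt hγ).comp_linearMap (LinearMap.snd ℝ _ _ ∘ₗ LinearMap.snd ℝ _ _))
  refine hφ.le_add_of_forall_le_segment (x := (Ws, Zs, Wts)) (y := (W, Z, Wt))
    (c := ρ₁ / 2 * frobSq (W * X - Z) + ρ₂ / 2 * frobSq (W - Wt)) fun t _ _ => ?_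
  have hmin := (h (Ws + t • (W - Ws)) (Zs + t • (Z - Zs)) (Wts + t • (Wt - Wts)) Λ₁s Λ₂s).2
  rw [AL_eq, AL_eq, ← h.feasible₁, ← h.feasible₂, sub_self, sub_self,
    show (Ws + t • (W - Ws)) * X - (Ws * X + t • (Z - Ws * X)) = 0 + t • (W * X - Z) by
      rw [Matrix.add_mul, Matrix.smul_mul, Matrix.sub_mul]; module,
    show Ws + t • (W - Ws) - (Ws + t • (Wt - Ws)) = 0 + t • (W - Wt) by module,
    augPenalty_add_smul, augPenalty_add_smul] at hmin
  simp only [augPenalty_zero, smul_zero, add_zero] at hmin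
  rw [← h.feasible₁, ← h.feasible₂]
  simp only [φ, Prod.fst_add, Prod.snd_add, Prod.smul_fst, Prod.smul_snd, Prod.fst_sub,
    Prod.snd_sub]
  linarith

end IsSaddle

noncomputable def blockEnergy {p q : ℕ} (ρ : ℝ) (Λs zs Λ z : Matrix (Fin p) (Fin q) ℝ) : ℝ :=
  1 / (2 * ρ) * frobSq (Λ - Λs) + ρ / 2 * frobSq (z - zs)

section Energy
variable {p q : ℕ}

lemma blockEnergy_nonneg {ρ : ℝ} (hρ : 0 ≤ ρ) (Λs zs Λ z : Matrix (Fin p) (Fin q) ℝ) :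
    0 ≤ blockEnergy ρ Λs zs Λ z := by
  unfold blockEnergy
  have := frobSq_nonneg (Λ - Λs)
  have := frobSq_nonneg (z - zs)
  positivity

lemma blockEnergy_sub_blockEnergy {ρ : ℝ} (hρ : ρ ≠ 0) (Λs zs Λ z z' r : Matrix (Fin p) (Fin q) ℝ) :
    blockEnergy ρ Λs zs Λ z - blockEnergy ρ Λs zs (Λ + ρ • r) z'
      = minner (Λs - (Λ + ρ • r)) r - ρ * minner (z' - z) (r + (z' - zs))
        + ρ / 2 * frobSq (r + (z' - z)) := by
  simp only [blockEnergy, frobSq_eq_minner, minner_add_left, minner_add_right, minner_sub_left,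
    minner_sub_right, minner_smul_left, minner_smul_right, minner_comm _ r, minner_comm zs,
    minner_comm z' z]
  field_simp
  ring

end Energy

lemma tendsto_atTop_zero_of_mul_le_sub_succ {u V : ℕ → ℝ} {c : ℝ} (hc : 0 < c)
    (hu : ∀ k, 0 ≤ u k) (hV : ∀ k, 0 ≤ V k) (h : ∀ k, c * u k ≤ V k - V (k + 1)) :
    Tendsto u atTop (𝓝 0) := by
  refine (summable_of_sum_range_le hu (c := V 0 / c) fun N => ?_).tendsto_atTop_zero
  rw [le_div_iff₀ hc, Finset.sum_mul]
  calc ∑ k ∈ range N, u k * c ≤ ∑ k ∈ range N, (V k - V (k + 1)) :=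
        Finset.sum_le_sum fun k _ => by linarith [h k]
    _ = V 0 - V N := Finset.sum_range_sub' V N
    _ ≤ V 0 := by linarith [hV N]

namespace IsADMMSequence
variable {d n : ℕ} {X : Matrix (Fin d) (Fin n) ℝ} {T : Matrix (Fin n) (Fin n) ℝ}
  {α β γ η ρ₁ ρ₂ : ℝ} {W : ℕ → Matrix (Fin n) (Fin d) ℝ} {Z : ℕ → Matrix (Fin n) (Fin n) ℝ}
  {Wt : ℕ → Matrix (Fin n) (Fin d) ℝ} {Λ₁ : ℕ → Matrix (Fin n) (Fin n) ℝ}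
  {Λ₂ : ℕ → Matrix (Fin n) (Fin d) ℝ} {Ws : Matrix (Fin n) (Fin d) ℝ}
  {Zs : Matrix (Fin n) (Fin n) ℝ} {Wts : Matrix (Fin n) (Fin d) ℝ}
  {Λ₁s : Matrix (Fin n) (Fin n) ℝ} {Λ₂s : Matrix (Fin n) (Fin d) ℝ}

lemma isSubgradient_objZ (hη : 0 ≤ η) (h : IsADMMSequence X T α β γ η ρ₁ ρ₂ W Z Wt Λ₁ Λ₂)
    (k : ℕ) : IsSubgradient (objZ T η) (Λ₁ (k + 1)) (Z (k + 1)) := by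
  obtain ⟨-, hZ, -, hΛ₁, -⟩ := h
  rw [hΛ₁ k]
  refine (convexOn_objZ T hη).isSubgradient_of_isMin_add_augPenalty fun Z' => ?_
  have := hZ k Z'
  simp only [AL_eq] at this
  linarith

lemma isSubgradient_objWt (hγ : 0 ≤ γ) (h : IsADMMSequence X T α β γ η ρ₁ ρ₂ W Z Wt Λ₁ Λ₂)
    (k : ℕ) : IsSubgradient (objWt γ) (Λ₂ (k + 1)) (Wt (k + 1)) := by
  obtain ⟨-, -, hWt, -, hΛ₂⟩ := h
  rw [hΛ₂ k]
  refine (convexOn_objWt hγ).isSubgradient_of_isMin_add_augPenalty fun Wt' => ?_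
  have := hWt k Wt'
  simp only [AL_eq] at this
  linarith

lemma objW_le (hα : 0 ≤ α) (hβ : 0 ≤ β) (h : IsADMMSequence X T α β γ η ρ₁ ρ₂ W Z Wt Λ₁ Λ₂)
    (k : ℕ) (W' : Matrix (Fin n) (Fin d) ℝ) :
    objW X α β (W (k + 1)) ≤ objW X α β W'
      + (minner (Λ₁ (k + 1) + ρ₁ • (Z (k + 1) - Z k)) ((W' - W (k + 1)) * X)
        + minner (Λ₂ (k + 1) + ρ₂ • (Wt (k + 1) - Wt k)) (W' - W (k + 1))) := by
  obtain ⟨hW, -, -, hΛ₁, hΛ₂⟩ := h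
  rw [show Λ₁ (k + 1) + ρ₁ • (Z (k + 1) - Z k) = Λ₁ k + ρ₁ • (W (k + 1) * X - Z k) by
      rw [hΛ₁ k]; module,
    show Λ₂ (k + 1) + ρ₂ • (Wt (k + 1) - Wt k) = Λ₂ k + ρ₂ • (W (k + 1) - Wt k) by
      rw [hΛ₂ k]; module]
  refine (convexOn_objW X hα hβ).le_add_of_forall_le_segment
    (c := ρ₁ / 2 * frobSq ((W' - W (k + 1)) * X) + ρ₂ / 2 * frobSq (W' - W (k + 1)))
    fun t _ _ => ?_
  have hmin := hW k (W (k + 1) + t • (W' - W (k + 1)))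
  rw [AL_eq, AL_eq,
    show (W (k + 1) + t • (W' - W (k + 1))) * X - Z k
      = W (k + 1) * X - Z k + t • ((W' - W (k + 1)) * X) by
      rw [Matrix.add_mul, Matrix.smul_mul]; abel,
    show W (k + 1) + t • (W' - W (k + 1)) - Wt k = W (k + 1) - Wt k + t • (W' - W (k + 1)) by
      abel,
    augPenalty_add_smul, augPenalty_add_smul] at hmin
  linarith

lemma minner_residual_Z_step_nonneg (hη : 0 ≤ η) (hρ₁ : 0 < ρ₁)
    (h : IsADMMSequence X T α β γ η ρ₁ ρ₂ W Z Wt Λ₁ Λ₂) (k : ℕ) :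
    0 ≤ minner (W (k + 2) * X - Z (k + 2)) (Z (k + 2) - Z (k + 1)) := by
  have := (h.isSubgradient_objZ hη k).minner_sub_nonneg (h.isSubgradient_objZ hη (k + 1))
  rw [h.2.2.2.1 (k + 1), add_sub_cancel_left, minner_smul_left] at this
  exact nonneg_of_mul_nonneg_right this hρ₁

lemma minner_residual_Wt_step_nonneg (hγ : 0 ≤ γ) (hρ₂ : 0 < ρ₂)
    (h : IsADMMSequence X T α β γ η ρ₁ ρ₂ W Z Wt Λ₁ Λ₂) (k : ℕ) :
    0 ≤ minner (W (k + 2) - Wt (k + 2)) (Wt (k + 2) - Wt (k + 1)) := by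
  have := (h.isSubgradient_objWt hγ k).minner_sub_nonneg (h.isSubgradient_objWt hγ (k + 1))
  rw [h.2.2.2.2 (k + 1), add_sub_cancel_left, minner_smul_left] at this
  exact nonneg_of_mul_nonneg_right this hρ₂

lemma variational_inequality (hα : 0 ≤ α) (hβ : 0 ≤ β) (hγ : 0 ≤ γ) (hη : 0 ≤ η)
    (h : IsADMMSequence X T α β γ η ρ₁ ρ₂ W Z Wt Λ₁ Λ₂)
    (hs : IsSaddle X T α β γ η ρ₁ ρ₂ Ws Zs Wts Λ₁s Λ₂s) (k : ℕ) :
    0 ≤ minner (Λ₁s - Λ₁ (k + 1)) (W (k + 1) * X - Z (k + 1))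
        - ρ₁ * minner (Z (k + 1) - Z k) (W (k + 1) * X - Z (k + 1) + (Z (k + 1) - Zs))
      + (minner (Λ₂s - Λ₂ (k + 1)) (W (k + 1) - Wt (k + 1))
        - ρ₂ * minner (Wt (k + 1) - Wt k) (W (k + 1) - Wt (k + 1) + (Wt (k + 1) - Wts))) := by
  have hsaddle := hs.obj_le hα hβ hγ hη (W (k + 1)) (Z (k + 1)) (Wt (k + 1))
  have hW := h.objW_le hα hβ k Ws
  have hZ := h.isSubgradient_objZ hη k Zs
  have hWt := h.isSubgradient_objWt hγ k Wts
  rw [Matrix.sub_mul, hs.feasible₁] at hW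
  rw [hs.feasible₂] at hW hsaddle
  simp only [minner_add_left, minner_add_right, minner_sub_left, minner_sub_right,
    minner_smul_left] at hsaddle hW hZ hWt ⊢
  linarith

lemma energy_descent (hα : 0 ≤ α) (hβ : 0 ≤ β) (hγ : 0 ≤ γ) (hη : 0 ≤ η) (hρ₁ : 0 < ρ₁)
    (hρ₂ : 0 < ρ₂) (h : IsADMMSequence X T α β γ η ρ₁ ρ₂ W Z Wt Λ₁ Λ₂)
    (hs : IsSaddle X T α β γ η ρ₁ ρ₂ Ws Zs Wts Λ₁s Λ₂s) (k : ℕ) :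
    ρ₁ / 2 * frobSq (W (k + 2) * X - Z (k + 2)) + ρ₂ / 2 * frobSq (W (k + 2) - Wt (k + 2))
      ≤ blockEnergy ρ₁ Λ₁s Zs (Λ₁ (k + 1)) (Z (k + 1))
          + blockEnergy ρ₂ Λ₂s Wts (Λ₂ (k + 1)) (Wt (k + 1))
        - (blockEnergy ρ₁ Λ₁s Zs (Λ₁ (k + 2)) (Z (k + 2))
          + blockEnergy ρ₂ Λ₂s Wts (Λ₂ (k + 2)) (Wt (k + 2))) := by
  have hvi := h.variational_inequality hα hβ hγ hη hs (k + 1)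
  have h₁ := blockEnergy_sub_blockEnergy hρ₁.ne' Λ₁s Zs (Λ₁ (k + 1)) (Z (k + 1)) (Z (k + 2))
    (W (k + 2) * X - Z (k + 2))
  have h₂ := blockEnergy_sub_blockEnergy hρ₂.ne' Λ₂s Wts (Λ₂ (k + 1)) (Wt (k + 1)) (Wt (k + 2))
    (W (k + 2) - Wt (k + 2))
  rw [← h.2.2.2.1 (k + 1)] at h₁
  rw [← h.2.2.2.2 (k + 1)] at h₂
  have m₁ := mul_le_mul_of_nonneg_left
    (frobSq_le_frobSq_add (h.minner_residual_Z_step_nonneg hη hρ₁ k)) (half_pos hρ₁).le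
  have m₂ := mul_le_mul_of_nonneg_left
    (frobSq_le_frobSq_add (h.minner_residual_Wt_step_nonneg hγ hρ₂ k)) (half_pos hρ₂).le
  linarith

lemma tendsto_frobSq_residuals (hα : 0 ≤ α) (hβ : 0 ≤ β) (hγ : 0 ≤ γ) (hη : 0 ≤ η)
    (hρ₁ : 0 < ρ₁) (hρ₂ : 0 < ρ₂) (h : IsADMMSequence X T α β γ η ρ₁ ρ₂ W Z Wt Λ₁ Λ₂)
    (hs : IsSaddle X T α β γ η ρ₁ ρ₂ Ws Zs Wts Λ₁s Λ₂s) :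
    Tendsto (fun k => frobSq (W k * X - Z k)) atTop (𝓝 0)
      ∧ Tendsto (fun k => frobSq (W k - Wt k)) atTop (𝓝 0) := by
  set E : ℕ → ℝ := fun j => blockEnergy ρ₁ Λ₁s Zs (Λ₁ (j + 1)) (Z (j + 1))
    + blockEnergy ρ₂ Λ₂s Wts (Λ₂ (j + 1)) (Wt (j + 1))
  have hE : ∀ k, 0 ≤ E k := fun k =>
    add_nonneg (blockEnergy_nonneg hρ₁.le ..) (blockEnergy_nonneg hρ₂.le ..)
  have hdescent : ∀ k, ρ₁ / 2 * frobSq (W (k + 2) * X - Z (k + 2))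
      + ρ₂ / 2 * frobSq (W (k + 2) - Wt (k + 2)) ≤ E k - E (k + 1) :=
    h.energy_descent hα hβ hγ hη hρ₁ hρ₂ hs
  constructor
  · refine (tendsto_add_atTop_iff_nat 2).mp (tendsto_atTop_zero_of_mul_le_sub_succ
      (half_pos hρ₁) (fun _ => frobSq_nonneg _) hE fun k => ?_)
    linarith [hdescent k, mul_nonneg (half_pos hρ₂).le (frobSq_nonneg (W (k + 2) - Wt (k + 2)))]
  · refine (tendsto_add_atTop_iff_nat 2).mp (tendsto_atTop_zero_of_mul_le_sub_succ
      (half_pos hρ₂) (fun _ => frobSq_nonneg _) hE fun k => ?_)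
    linarith [hdescent k, mul_nonneg (half_pos hρ₁).le (frobSq_nonneg (W (k + 2) * X - Z (k + 2)))]

end IsADMMSequence

/-- constraint satisfaction.  Assuming a saddle point of 𝓛 exists,
both constraint violations of the ADMM iterates converge to zero:
‖WᵏX − Zᵏ‖_F → 0 and ‖W̃ᵏ − Wᵏ‖_F → 0. -/
theorem admm_constraint_violations_vanish {d n : ℕ}
    (X : Matrix (Fin d) (Fin n) ℝ) (T : Matrix (Fin n) (Fin n) ℝ)
    (α β γ η ρ₁ ρ₂ : ℝ) (hα : 0 ≤ α) (hβ : 0 ≤ β) (hγ : 0 ≤ γ) (hη : 0 ≤ η)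
    (hρ₁ : 0 < ρ₁) (hρ₂ : 0 < ρ₂)
    (W : ℕ → Matrix (Fin n) (Fin d) ℝ) (Z : ℕ → Matrix (Fin n) (Fin n) ℝ)
    (Wt : ℕ → Matrix (Fin n) (Fin d) ℝ) (Λ₁ : ℕ → Matrix (Fin n) (Fin n) ℝ)
    (Λ₂ : ℕ → Matrix (Fin n) (Fin d) ℝ)
    (hadmm : IsADMMSequence X T α β γ η ρ₁ ρ₂ W Z Wt Λ₁ Λ₂)
    (hsaddle : ∃ Ws Zs Wts Λ₁s Λ₂s, IsSaddle X T α β γ η ρ₁ ρ₂ Ws Zs Wts Λ₁s Λ₂s) :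
    Filter.Tendsto (fun k => frob (W k * X - Z k)) Filter.atTop (nhds 0)
    ∧ Filter.Tendsto (fun k => frob (Wt k - W k)) Filter.atTop (nhds 0) := by
  obtain ⟨Ws, Zs, Wts, Λ₁s, Λ₂s, hs⟩ := hsaddle
  obtain ⟨h₁, h₂⟩ := hadmm.tendsto_frobSq_residuals hα hβ hγ hη hρ₁ hρ₂ hs
  refine ⟨by simpa [frob] using h₁.sqrt, ?_⟩
  simpa [frob, frobSq_sub_comm (Wt _)] using h₂.sqrt
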